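/- For every odd positive integer n, hmin(n) = (n + 2 + (n mod 4))/4 + [n ∈ {5, 9}], where [·] equals 1 if the condition holds and 0 otherwise. In particular, hmin(n) = (n+3)/4 if n ≡ 1 (mod 4) and n ∉ {5, 9}, and hmin(n) = (n+5)/4 if n ≡ 3 (mod 4). -/

import Mathlib

open Finset
open scoped Classical

/-- The closed neighborhood `N[v] = {v} ∪ N(v)` of a vertex `v` in a simple graph `G`.
A `d`-regular graph with loops is modeled by a simple graph in which every
closed neighborhood has size `d`. -/
noncomputable def closedNbhd {n : ℕ} (G : SimpleGraph (Fin n)) (v : Fin n) : Finset (Fin n) :=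
  Finset.univ.filter fun u => u = v ∨ G.Adj v u

/-- A configuration with parameters `(n, d, h)`: a simple graph `G` on `n` vertices all
of whose closed neighborhoods have size `d` (i.e. a `d`-regular graph with loops),
together with an opinion function `f : V → {1, -1}` having exactly `h` happy vertices. -/
def IsConfig {n : ℕ} (d h : ℕ) (G : SimpleGraph (Fin n)) (f : Fin n → ℤ) : Prop :=
  (∀ v, (closedNbhd G v).card = d) ∧ (∀ v, f v = 1 ∨ f v = -1) ∧
  (Finset.univ.filter fun v => f v = 1).card = h

/-- The number of proponents: vertices `v` with `∑_{u ∈ N[v]} f u ≥ 1`. -/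
noncomputable def numProponents {n : ℕ} (G : SimpleGraph (Fin n)) (f : Fin n → ℤ) : ℕ :=
  (Finset.univ.filter fun v => 1 ≤ ∑ u ∈ closedNbhd G v, f u).card

/-- A configuration is approving if more than `n/2` of its vertices are proponents. -/
def IsApproving {n : ℕ} (G : SimpleGraph (Fin n)) (f : Fin n → ℤ) : Prop :=
  2 * numProponents G f > n

/-- `hmin n d`: the least `h` for which an approving configuration with parameters
`(n, d, h)` exists. -/
noncomputable def hmin (n d : ℕ) : ℕ :=
  sInf {h : ℕ | ∃ (G : SimpleGraph (Fin n)) (f : Fin n → ℤ), IsConfig d h G f ∧ IsApproving G f}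

/-- `hmax n d`: the greatest `h ≤ n` for which a disapproving configuration with parameters
`(n, d, h)` exists. -/
noncomputable def hmax (n d : ℕ) : ℕ :=
  sSup {h : ℕ | h ≤ n ∧
    ∃ (G : SimpleGraph (Fin n)) (f : Fin n → ℤ), IsConfig d h G f ∧ ¬ IsApproving G f}

/-- `hminN n`: the minimum of `hmin n d` over odd `d` with `1 ≤ d ≤ n`. -/
noncomputable def hminN (n : ℕ) : ℕ :=
  sInf {m : ℕ | ∃ d : ℕ, Odd d ∧ 1 ≤ d ∧ d ≤ n ∧ m = hmin n d}

/-!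
Each proponent sees at least `(d+1)/2` happy vertices and each happy vertex is seen by exactly `d`
vertices, so `(n+1)(d+1) ≤ 4hd`, hence `4h ≥ n+2`. When `n = 4k+1` and `h = k+1` this forces
`d = 2k+1` and every proponent to see all happy vertices; the vertices seeing all of them then form
the common closed neighbourhood `T` of the happy vertices, of size `d`, and double counting the
adjacencies between `T` and its complement gives `2k ≤ k(k-1)`, so `k ≥ 3`. This costs `n = 5, 9`
one extra happy vertex. The bounds are attained by a cocktail-party graph beside a clique
(`n ≡ 3 mod 4`), by a graph in which the happy vertices share the closed neighbourhood `[0,2k]`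
(`n ≡ 1 mod 4`, `k ≥ 3`), and by small circulant graphs.
-/

variable {n : ℕ}

def happySet (f : Fin n → ℤ) : Finset (Fin n) := univ.filter fun v => f v = 1

noncomputable def proponents (G : SimpleGraph (Fin n)) (f : Fin n → ℤ) : Finset (Fin n) :=
  univ.filter fun v => 1 ≤ ∑ u ∈ closedNbhd G v, f u

section ClosedNbhd

variable {G : SimpleGraph (Fin n)}

lemma mem_closedNbhd {u v : Fin n} : u ∈ closedNbhd G v ↔ u = v ∨ G.Adj v u := by
  simp [closedNbhd]

lemma self_mem_closedNbhd (v : Fin n) : v ∈ closedNbhd G v :=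
  mem_closedNbhd.2 (Or.inl rfl)

lemma mem_closedNbhd_comm {u v : Fin n} : u ∈ closedNbhd G v ↔ v ∈ closedNbhd G u := by
  simp only [mem_closedNbhd, eq_comm, G.adj_comm]

lemma sum_card_closedNbhd_inter_comm (S T : Finset (Fin n)) :
    ∑ v ∈ S, #(closedNbhd G v ∩ T) = ∑ u ∈ T, #(closedNbhd G u ∩ S) := by
  have h := sum_card_bipartiteAbove_eq_sum_card_bipartiteBelow
    (s := S) (t := T) (r := fun v u => u ∈ closedNbhd G v)
  simp only [bipartiteAbove, bipartiteBelow, mem_closedNbhd_comm (u := _) (v := _)] at h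
  simpa only [filter_mem_eq_inter, inter_comm] using h

end ClosedNbhd

section LowerBound

variable {G : SimpleGraph (Fin n)} {f : Fin n → ℤ} {d h : ℕ}

lemma sum_eq_two_mul_card_inter_happySet_sub (hf : ∀ v, f v = 1 ∨ f v = -1)
    (S : Finset (Fin n)) : ∑ u ∈ S, f u = 2 * #(S ∩ happySet f) - #S := by
  have hS : ∀ u ∈ S, f u = 2 * (if u ∈ happySet f then 1 else 0) - 1 := by
    intro u _
    rcases hf u with hu | hu <;> simp [happySet, hu]
  rw [sum_congr rfl hS, sum_sub_distrib, ← mul_sum, sum_ite_mem, sum_const]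
  simp

lemma IsConfig.mem_proponents_iff (hc : IsConfig d h G f) {v : Fin n} :
    v ∈ proponents G f ↔ d + 1 ≤ 2 * #(closedNbhd G v ∩ happySet f) := by
  rw [proponents, mem_filter, sum_eq_two_mul_card_inter_happySet_sub hc.2.1, hc.1 v]
  simp only [mem_univ, true_and]
  omega

lemma IsConfig.mul_le_of_isApproving (hc : IsConfig d h G f) (ha : IsApproving G f) :
    (n + 1) * (d + 1) ≤ 4 * h * d := by
  have hseen : #(proponents G f) * (d + 1) ≤
      2 * ∑ v ∈ proponents G f, #(closedNbhd G v ∩ happySet f) := by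
    rw [mul_sum, ← smul_eq_mul, ← sum_const]
    exact sum_le_sum fun v hv => hc.mem_proponents_iff.1 hv
  have hcount : ∑ v ∈ proponents G f, #(closedNbhd G v ∩ happySet f) ≤ h * d := calc
    _ ≤ ∑ v, #(closedNbhd G v ∩ happySet f) := sum_le_sum_of_subset (subset_univ _)
    _ = ∑ u ∈ happySet f, #(closedNbhd G u ∩ univ) := sum_card_closedNbhd_inter_comm _ _
    _ = h * d := by simp [inter_univ, hc.1, hc.2.2, happySet]
  have hP : n + 1 ≤ 2 * #(proponents G f) := ha
  nlinarith

lemma IsConfig.add_two_le_four_mul (hc : IsConfig d h G f) (ha : IsApproving G f) (hn : 0 < n) :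
    n + 2 ≤ 4 * h := by
  have hd : 1 ≤ d := hc.1 ⟨0, hn⟩ ▸ card_pos.2 ⟨_, self_mem_closedNbhd _⟩
  nlinarith [hc.mul_le_of_isApproving ha]

end LowerBound

section Tight

variable {G : SimpleGraph (Fin n)} {f : Fin n → ℤ} {d h : ℕ}

lemma IsConfig.card_happySet (hc : IsConfig d h G f) : #(happySet f) = h := hc.2.2

lemma IsConfig.happySet_subset_closedNbhd (hc : IsConfig d h G f) (hdh : 2 * h ≤ d + 1)
    {v : Fin n} (hv : v ∈ proponents G f) : happySet f ⊆ closedNbhd G v := by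
  have hv := hc.mem_proponents_iff.1 hv
  have hH := hc.card_happySet
  refine inter_eq_right.1 (eq_of_subset_of_card_le inter_subset_right ?_)
  omega

noncomputable def seesAllHappy (G : SimpleGraph (Fin n)) (f : Fin n → ℤ) : Finset (Fin n) :=
  univ.filter fun v => happySet f ⊆ closedNbhd G v

lemma IsConfig.closedNbhd_eq_seesAllHappy (hc : IsConfig d h G f) (hdh : 2 * h ≤ d + 1)
    (hP : d ≤ #(proponents G f)) {a : Fin n} (ha : a ∈ happySet f) :
    closedNbhd G a = seesAllHappy G f := by
  refine (eq_of_subset_of_card_le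
    (fun v (hv : v ∈ seesAllHappy G f) => mem_closedNbhd_comm.1 ((mem_filter.1 hv).2 ha)) ?_).symm
  calc #(closedNbhd G a) = d := hc.1 a
    _ ≤ #(proponents G f) := hP
    _ ≤ _ := card_le_card fun v hv =>
      mem_filter.2 ⟨mem_univ v, hc.happySet_subset_closedNbhd hdh hv⟩

lemma IsConfig.two_mul_sub_le_card_closedNbhd_inter_sdiff (hc : IsConfig d h G f)
    {T : Finset (Fin n)} (hT : ∀ a ∈ happySet f, closedNbhd G a = T) (hTd : #T = d) {x : Fin n}
    (hx : x ∉ T) : 2 * d - n ≤ #(closedNbhd G x ∩ (T \ happySet f)) := by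
  have hxT : closedNbhd G x ∩ T ⊆ closedNbhd G x ∩ (T \ happySet f) := by
    intro u hu
    obtain ⟨hux, huT⟩ := mem_inter.1 hu
    exact mem_inter.2 ⟨hux, mem_sdiff.2 ⟨huT, fun huH =>
      hx (hT u huH ▸ mem_closedNbhd_comm.1 hux)⟩⟩
  have hsplit := card_inter_add_card_sdiff (closedNbhd G x) T
  have hxTc : #(closedNbhd G x \ T) ≤ #Tᶜ :=
    card_le_card fun u hu => mem_compl.2 (mem_sdiff.1 hu).2
  have := card_le_card hxT
  have hdn := card_le_univ (closedNbhd G x)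
  rw [hc.1 x] at hsplit
  rw [hc.1 x, Fintype.card_fin] at hdn
  rw [card_compl, Fintype.card_fin, hTd] at hxTc
  omega

lemma IsConfig.card_closedNbhd_inter_compl_le (hc : IsConfig d h G f) {T : Finset (Fin n)}
    (hT : ∀ a ∈ happySet f, closedNbhd G a = T) {w : Fin n} (hw : w ∈ T \ happySet f) :
    #(closedNbhd G w ∩ Tᶜ) ≤ d - h - 1 := by
  obtain ⟨hwT, hwH⟩ := mem_sdiff.1 hw
  have hwN : insert w (happySet f) ⊆ closedNbhd G w ∩ T :=
    insert_subset (mem_inter.2 ⟨self_mem_closedNbhd w, hwT⟩) fun b hb =>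
      mem_inter.2 ⟨mem_closedNbhd_comm.1 (hT b hb ▸ hwT), hT b hb ▸ self_mem_closedNbhd b⟩
  have hsplit := card_inter_add_card_sdiff (closedNbhd G w) T
  have := card_le_card hwN
  rw [card_insert_of_notMem hwH, hc.card_happySet] at this
  rw [hc.1 w, sdiff_eq_inter_compl] at hsplit
  omega

lemma IsConfig.mul_le_of_two_mul_le_add_one (hc : IsConfig d h G f) (hdh : 2 * h ≤ d + 1)
    (hP : d ≤ #(proponents G f)) (hh : 0 < h) :
    (n - d) * (2 * d - n) ≤ (d - h) * (d - h - 1) := by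
  obtain ⟨a, ha⟩ : (happySet f).Nonempty := card_pos.1 (hc.card_happySet ▸ hh)
  have hT : ∀ b ∈ happySet f, closedNbhd G b = closedNbhd G a := fun b hb =>
    (hc.closedNbhd_eq_seesAllHappy hdh hP hb).trans (hc.closedNbhd_eq_seesAllHappy hdh hP ha).symm
  have hW : #(closedNbhd G a \ happySet f) = d - h := by
    rw [card_sdiff_of_subset fun b hb => hT b hb ▸ self_mem_closedNbhd b, hc.1 a, hc.card_happySet]
  calc (n - d) * (2 * d - n) = ∑ _x ∈ (closedNbhd G a)ᶜ, (2 * d - n) := by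
        rw [sum_const, card_compl, Fintype.card_fin, hc.1 a, smul_eq_mul]
    _ ≤ ∑ x ∈ (closedNbhd G a)ᶜ, #(closedNbhd G x ∩ (closedNbhd G a \ happySet f)) :=
        sum_le_sum fun x hx =>
          hc.two_mul_sub_le_card_closedNbhd_inter_sdiff hT (hc.1 a) (mem_compl.1 hx)
    _ = ∑ w ∈ closedNbhd G a \ happySet f, #(closedNbhd G w ∩ (closedNbhd G a)ᶜ) :=
        sum_card_closedNbhd_inter_comm _ _
    _ ≤ ∑ _w ∈ closedNbhd G a \ happySet f, (d - h - 1) :=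
        sum_le_sum fun w hw => hc.card_closedNbhd_inter_compl_le hT hw
    _ = (d - h) * (d - h - 1) := by rw [sum_const, hW, smul_eq_mul]

lemma IsConfig.three_le_of_eq_four_mul_add_one (hc : IsConfig d h G f) (ha : IsApproving G f)
    {k : ℕ} (hn : n = 4 * k + 1) (hh : h = k + 1) (hk : 0 < k) : 3 ≤ k := by
  have hP : 2 * k + 1 ≤ #(proponents G f) := by
    have : n < 2 * #(proponents G f) := ha
    omega
  obtain ⟨v, hv⟩ : (proponents G f).Nonempty := card_pos.1 (by omega)
  have hd_le : d ≤ 2 * k + 1 := by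
    have := hc.mem_proponents_iff.1 hv
    have := card_le_card (inter_subset_right (s₁ := closedNbhd G v) (s₂ := happySet f))
    have := hc.card_happySet
    omega
  have hd : d = 2 * k + 1 := by
    have := hc.mul_le_of_isApproving ha
    subst hn hh
    nlinarith
  subst hd hh
  have := hc.mul_le_of_two_mul_le_add_one (by omega) hP (by omega)
  rw [hn, show 4 * k + 1 - (2 * k + 1) = 2 * k by omega,
    show 2 * (2 * k + 1) - (4 * k + 1) = 1 by omega, show 2 * k + 1 - (k + 1) = k by omega] at this
  by_contra! hk3
  interval_cases k <;> omega

end Tight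

section Constructions

lemma card_eq_card_filter_range {s : Finset (Fin n)} (R : ℕ → Prop) [DecidablePred R]
    (hs : ∀ u : Fin n, u ∈ s ↔ R u) : #s = #((range n).filter R) := by
  rw [← card_map Fin.valEmbedding]
  congr 1
  ext a
  simp [hs, Fin.exists_iff, and_comm]

def prefixOpinion (n h : ℕ) : Fin n → ℤ := fun u => if u.val < h then 1 else -1

lemma happySet_prefixOpinion (h : ℕ) :
    happySet (prefixOpinion n h) = univ.filter fun u : Fin n => u.val < h := by
  ext u
  simp [happySet, prefixOpinion]

variable {G : SimpleGraph (Fin n)} {d h : ℕ}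

lemma isConfig_prefixOpinion_of_forall (hreg : ∀ v, #(closedNbhd G v) = d) (hhn : h ≤ n)
    {p : ℕ} (hpn : p ≤ n) (hp : n < 2 * p)
    (hprop : ∀ v : Fin n, v.val < p → d + 1 ≤ 2 * #((closedNbhd G v).filter fun u => u.val < h)) :
    IsConfig d h G (prefixOpinion n h) ∧ IsApproving G (prefixOpinion n h) := by
  have hc : IsConfig d h G (prefixOpinion n h) := by
    refine ⟨hreg, fun v => ?_, ?_⟩
    · unfold prefixOpinion; split_ifs <;> simp
    · rw [← happySet, happySet_prefixOpinion, Fin.card_filter_val_lt, min_eq_right hhn]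
  refine ⟨hc, ?_⟩
  have hsub : (univ.filter fun v : Fin n => v.val < p) ⊆ proponents G (prefixOpinion n h) := by
    intro v hv
    rw [hc.mem_proponents_iff, happySet_prefixOpinion, inter_filter, inter_univ]
    exact hprop v (mem_filter.1 hv).2
  have := card_le_card hsub
  rw [Fin.card_filter_val_lt, min_eq_right hpn] at this
  show n < 2 * #(proponents _ _)
  omega

lemma closedNbhd_circulantGraph [NeZero n] {s : Finset (Fin n)} (hs0 : 0 ∈ s)
    (hneg : ∀ x ∈ s, -x ∈ s) (v : Fin n) :
    closedNbhd (SimpleGraph.circulantGraph (s : Set (Fin n))) v =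
      univ.filter fun u => u - v ∈ s := by
  ext u
  simp only [mem_closedNbhd, SimpleGraph.circulantGraph_adj, mem_coe, mem_filter, mem_univ,
    true_and]
  constructor
  · rintro (rfl | ⟨-, h | h⟩)
    · simpa using hs0
    · simpa using hneg _ h
    · exact h
  · intro h
    by_cases huv : u = v
    · exact Or.inl huv
    · exact Or.inr ⟨Ne.symm huv, Or.inr h⟩

lemma card_closedNbhd_circulantGraph [NeZero n] {s : Finset (Fin n)} (hs0 : 0 ∈ s)
    (hneg : ∀ x ∈ s, -x ∈ s) (v : Fin n) :
    #(closedNbhd (SimpleGraph.circulantGraph (s : Set (Fin n))) v) = #s := by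
  rw [closedNbhd_circulantGraph hs0 hneg]
  exact card_bij (fun u _ => u - v) (fun u hu => (mem_filter.1 hu).2)
    (fun _ _ _ _ => sub_left_inj.1) fun x hx => ⟨x + v, by simpa using hx, by simp⟩

lemma exists_forall_card_closedNbhd_eq {d : ℕ} (hn : 0 < n) (hd : Odd d) (hdn : d ≤ n) :
    ∃ G : SimpleGraph (Fin n), ∀ v, #(closedNbhd G v) = d := by
  have : NeZero n := ⟨hn.ne'⟩
  obtain ⟨m, rfl⟩ := hd
  set s := univ.filter fun x : Fin n => x.val ≤ m ∨ n - m ≤ x.val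
  have hneg : ∀ x ∈ s, -x ∈ s := by
    intro x hx
    simp only [s, mem_filter, mem_univ, true_and, Fin.val_neg'] at hx ⊢
    rcases Nat.eq_zero_or_pos x.val with h0 | hpos
    · simp [h0]
    · rw [Nat.mod_eq_of_lt (by omega)]
      omega
  have hs : #s = 2 * m + 1 := by
    rw [card_eq_card_filter_range (fun a => a ≤ m ∨ n - m ≤ a) fun u => by simp [s]]
    have : (range n).filter (fun a => a ≤ m ∨ n - m ≤ a) = range (m + 1) ∪ Ico (n - m) n := by
      ext a
      simp only [mem_filter, mem_range, mem_union, mem_Ico]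
      omega
    rw [this, card_union_of_disjoint, card_range, Nat.card_Ico]
    · omega
    · exact disjoint_left.2 fun a ha hb => by simp only [mem_range, mem_Ico] at ha hb; omega
  exact ⟨_, fun v => (card_closedNbhd_circulantGraph (s := s) (by simp [s]) hneg v).trans hs⟩

end Constructions

section Small

lemma exists_isConfig_five :
    ∃ (G : SimpleGraph (Fin 5)) (f : Fin 5 → ℤ), IsConfig 1 3 G f ∧ IsApproving G f := by
  have hN := closedNbhd_circulantGraph (s := ({0} : Finset (Fin 5))) (by decide) (by decide)
  refine ⟨SimpleGraph.circulantGraph ({0} : Finset (Fin 5)), prefixOpinion 5 3, ?_⟩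
  simp only [IsConfig, IsApproving, numProponents, hN]
  decide

lemma exists_isConfig_nine :
    ∃ (G : SimpleGraph (Fin 9)) (f : Fin 9 → ℤ), IsConfig 3 4 G f ∧ IsApproving G f := by
  have hN := closedNbhd_circulantGraph (s := ({0, 1, 8} : Finset (Fin 9))) (by decide) (by decide)
  refine ⟨SimpleGraph.circulantGraph ({0, 1, 8} : Finset (Fin 9)), 
    fun u => if u ∈ ({0, 1, 3, 4} : Finset (Fin 9)) then 1 else -1, ?_⟩
  simp only [IsConfig, IsApproving, numProponents, hN]
  decide

end Small

section ThreeModFour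

def cocktailPartyUnionCliqueRel (k a b : ℕ) : Prop :=
  (a < 2 * k + 2 ∧ b < 2 * k + 2 ∧ a + b ≠ 2 * k + 1) ∨ (2 * k + 2 ≤ a ∧ 2 * k + 2 ≤ b)

def cocktailPartyUnionClique (n k : ℕ) : SimpleGraph (Fin n) :=
  SimpleGraph.fromRel fun u v => cocktailPartyUnionCliqueRel k u v

lemma mem_closedNbhd_cocktailPartyUnionClique {k : ℕ} {u v : Fin n} :
    u ∈ closedNbhd (cocktailPartyUnionClique n k) v ↔ cocktailPartyUnionCliqueRel k v u := by
  rw [mem_closedNbhd, cocktailPartyUnionClique, SimpleGraph.fromRel_adj, ne_eq, Fin.ext_iff,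
    Fin.ext_iff]
  unfold cocktailPartyUnionCliqueRel
  omega

lemma card_closedNbhd_cocktailPartyUnionClique {k : ℕ} (hn : n = 4 * k + 3) (v : Fin n) :
    #(closedNbhd (cocktailPartyUnionClique n k) v) = 2 * k + 1 := by
  rw [card_eq_card_filter_range _ fun u => mem_closedNbhd_cocktailPartyUnionClique]
  rcases lt_or_ge v.val (2 * k + 2) with hv | hv
  · have : (range n).filter (cocktailPartyUnionCliqueRel k v) =
        (range (2 * k + 2)).erase (2 * k + 1 - v.val) := by
      ext a
      simp only [mem_filter, mem_range, mem_erase, cocktailPartyUnionCliqueRel]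
      omega
    rw [this, card_erase_of_mem (mem_range.2 (by omega)), card_range]
    omega
  · have : (range n).filter (cocktailPartyUnionCliqueRel k v) = Ico (2 * k + 2) n := by
      ext a
      simp only [mem_filter, mem_range, mem_Ico, cocktailPartyUnionCliqueRel]
      omega
    rw [this, Nat.card_Ico]
    omega

lemma exists_isConfig_of_eq_four_mul_add_three {k : ℕ} (hn : n = 4 * k + 3) :
    ∃ (G : SimpleGraph (Fin n)) (f : Fin n → ℤ),
      IsConfig (2 * k + 1) (k + 2) G f ∧ IsApproving G f := by
  refine ⟨cocktailPartyUnionClique n k, prefixOpinion n (k + 2),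
    isConfig_prefixOpinion_of_forall (p := 2 * k + 2) (card_closedNbhd_cocktailPartyUnionClique hn)
      (by omega) (by omega) (by omega) fun v hv => ?_⟩
  have hsub : (range (k + 2)).erase (2 * k + 1 - v.val) ⊆
      (range n).filter fun a => cocktailPartyUnionCliqueRel k v a ∧ a < k + 2 := by
    intro a ha
    rw [mem_filter]
    simp only [mem_erase, mem_range, cocktailPartyUnionCliqueRel] at ha ⊢
    omega
  have := pred_card_le_card_erase (s := range (k + 2)) (a := 2 * k + 1 - v.val)
  rw [card_range] at this
  rw [card_eq_card_filter_range (fun a => cocktailPartyUnionCliqueRel k v a ∧ a < k + 2)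
    fun u => by rw [mem_filter, mem_closedNbhd_cocktailPartyUnionClique]]
  have := card_le_card hsub
  omega

end ThreeModFour

section OneModFour

/-- For `n = 4k+1`: the happy vertices `[0,k]` are adjacent to all of `[0,2k]`, the vertices
`[k+1,2k]` carry the complement of the cycle `k+1, …, 2k`, and `[2k+1,4k]` is a clique in which
`x` is also adjacent to `(x+1)/2`. -/
def oneModFourRel (k a b : ℕ) : Prop :=
  (a ≤ 2 * k ∧ b ≤ 2 * k ∧ (a ≤ k ∨ b ≤ k ∨ a = b ∨
    (a + 1 ≠ b ∧ b + 1 ≠ a ∧ ¬(a = k + 1 ∧ b = 2 * k) ∧ ¬(a = 2 * k ∧ b = k + 1)))) ∨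
  (2 * k < a ∧ 2 * k < b) ∨ (2 * k < b ∧ (b + 1) / 2 = a) ∨ (2 * k < a ∧ (a + 1) / 2 = b)

def oneModFourGraph (n k : ℕ) : SimpleGraph (Fin n) :=
  SimpleGraph.fromRel fun u v => oneModFourRel k u v

lemma mem_closedNbhd_oneModFourGraph {k : ℕ} {u v : Fin n} :
    u ∈ closedNbhd (oneModFourGraph n k) v ↔ oneModFourRel k v u := by
  rw [mem_closedNbhd, oneModFourGraph, SimpleGraph.fromRel_adj, ne_eq, Fin.ext_iff, Fin.ext_iff]
  unfold oneModFourRel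
  omega

lemma card_closedNbhd_oneModFourGraph {k : ℕ} (hn : n = 4 * k + 1) (hk : 3 ≤ k) (v : Fin n) :
    #(closedNbhd (oneModFourGraph n k) v) = 2 * k + 1 := by
  rw [card_eq_card_filter_range _ fun u => mem_closedNbhd_oneModFourGraph]
  have hv := v.isLt
  rcases le_or_gt v.val k with hH | hW
  · have : (range n).filter (oneModFourRel k v) = range (2 * k + 1) := by
      ext a
      simp only [mem_filter, mem_range, oneModFourRel]
      omega
    rw [this, card_range]
  rcases le_or_gt v.val (2 * k) with hW | hX
  · have : (range n).filter (oneModFourRel k v) =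
        (range (2 * k + 1) \ {if v.val = k + 1 then 2 * k else v.val - 1,
          if v.val = 2 * k then k + 1 else v.val + 1}) ∪ {2 * v.val - 1, 2 * v.val} := by
      ext a
      simp only [mem_filter, mem_range, oneModFourRel, mem_union, mem_sdiff, mem_insert,
        mem_singleton]
      split_ifs <;> omega
    rw [this, card_union_of_disjoint, card_sdiff_of_subset, card_pair, card_pair, card_range]
    · omega
    · omega
    · split_ifs <;> omega
    · intro a
      simp only [mem_insert, mem_singleton, mem_range]
      split_ifs <;> omega
    · refine disjoint_left.2 fun a ha hb => ?_
      simp only [mem_sdiff, mem_range, mem_insert, mem_singleton] at ha hb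
      omega
  · have : (range n).filter (oneModFourRel k v) = insert ((v.val + 1) / 2) (Ico (2 * k + 1) n) := by
      ext a
      simp only [mem_filter, mem_range, oneModFourRel, mem_insert, mem_Ico]
      omega
    rw [this, card_insert_of_notMem (by simp only [mem_Ico]; omega), Nat.card_Ico]
    omega

lemma exists_isConfig_of_eq_four_mul_add_one {k : ℕ} (hn : n = 4 * k + 1) (hk : 3 ≤ k) :
    ∃ (G : SimpleGraph (Fin n)) (f : Fin n → ℤ),
      IsConfig (2 * k + 1) (k + 1) G f ∧ IsApproving G f := by
  refine ⟨oneModFourGraph n k, prefixOpinion n (k + 1),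
    isConfig_prefixOpinion_of_forall (p := 2 * k + 1) (card_closedNbhd_oneModFourGraph hn hk)
      (by omega) (by omega) (by omega) fun v hv => ?_⟩
  have hsub : range (k + 1) ⊆ (range n).filter fun a => oneModFourRel k v a ∧ a < k + 1 := by
    intro a ha
    rw [mem_filter]
    simp only [mem_range, oneModFourRel] at ha ⊢
    omega
  rw [card_eq_card_filter_range (fun a => oneModFourRel k v a ∧ a < k + 1)
    fun u => by rw [mem_filter, mem_closedNbhd_oneModFourGraph]]
  have := card_le_card hsub
  rw [card_range] at this
  omega

end OneModFour

section Assembly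

variable {G : SimpleGraph (Fin n)} {f : Fin n → ℤ} {d h : ℕ}

def hminClosedForm (n : ℕ) : ℕ := (n + 2 + n % 4) / 4 + if n = 5 ∨ n = 9 then 1 else 0

lemma hminClosedForm_le (hn : Odd n) (hc : IsConfig d h G f) (ha : IsApproving G f) :
    hminClosedForm n ≤ h := by
  have h4 := hc.add_two_le_four_mul ha hn.pos
  obtain ⟨m, rfl⟩ := hn
  unfold hminClosedForm
  split_ifs with h59
  · have : h ≠ m / 2 + 1 := fun hh => by
      have := hc.three_le_of_eq_four_mul_add_one ha (k := m / 2) (by omega) hh (by omega)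
      omega
    omega
  · omega

lemma exists_isConfig_all_happy (hn : 0 < n) (hd : Odd d) (hdn : d ≤ n) :
    ∃ (G : SimpleGraph (Fin n)) (f : Fin n → ℤ), IsConfig d n G f ∧ IsApproving G f := by
  obtain ⟨G, hG⟩ := exists_forall_card_closedNbhd_eq hn hd hdn
  refine ⟨G, _, isConfig_prefixOpinion_of_forall hG le_rfl le_rfl (by omega) fun v _ => ?_⟩
  rw [filter_true_of_mem fun u _ => u.isLt, hG v]
  have := hd.pos
  omega

lemma exists_isConfig_hminClosedForm (hn : Odd n) :
    ∃ d, Odd d ∧ d ≤ n ∧ ∃ (G : SimpleGraph (Fin n)) (f : Fin n → ℤ),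
      IsConfig d (hminClosedForm n) G f ∧ IsApproving G f := by
  obtain ⟨m, rfl⟩ := hn
  by_cases h1 : m = 0
  · subst h1
    exact ⟨1, odd_one, le_rfl, exists_isConfig_all_happy one_pos odd_one le_rfl⟩
  by_cases h5 : m = 2
  · subst h5
    exact ⟨1, odd_one, by norm_num, exists_isConfig_five⟩
  by_cases h9 : m = 4
  · subst h9
    exact ⟨3, by decide, by norm_num, exists_isConfig_nine⟩
  have hd : Odd (2 * (m / 2) + 1) := ⟨m / 2, rfl⟩
  rcases Nat.even_or_odd m with ⟨k, hk⟩ | ⟨k, hk⟩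
  · have hform : hminClosedForm (2 * m + 1) = m / 2 + 1 := by
      unfold hminClosedForm
      split_ifs <;> omega
    rw [hform]
    exact ⟨_, hd, by omega,
      exists_isConfig_of_eq_four_mul_add_one (k := m / 2) (by omega) (by omega)⟩
  · have hform : hminClosedForm (2 * m + 1) = m / 2 + 2 := by
      unfold hminClosedForm
      split_ifs <;> omega
    rw [hform]
    exact ⟨_, hd, by omega, exists_isConfig_of_eq_four_mul_add_three (k := m / 2) (by omega)⟩

lemma hmin_le (hc : IsConfig d h G f) (ha : IsApproving G f) : hmin n d ≤ h :=
  Nat.sInf_le ⟨G, f, hc, ha⟩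

lemma hminClosedForm_le_hmin (hn : Odd n) (hd : Odd d) (hdn : d ≤ n) :
    hminClosedForm n ≤ hmin n d :=
  le_csInf ⟨n, exists_isConfig_all_happy hn.pos hd hdn⟩ fun _ ⟨_, _, hc, ha⟩ =>
    hminClosedForm_le hn hc ha

lemma hminN_eq_hminClosedForm (hn : Odd n) : hminN n = hminClosedForm n := by
  obtain ⟨d, hd, hdn, G, f, hc, ha⟩ := exists_isConfig_hminClosedForm hn
  have hmin_eq : hmin n d = hminClosedForm n :=
    le_antisymm (hmin_le hc ha) (hminClosedForm_le_hmin hn hd hdn)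
  refine le_antisymm (Nat.sInf_le ⟨d, hd, hd.pos, hdn, hmin_eq.symm⟩) ?_
  exact le_csInf ⟨_, d, hd, hd.pos, hdn, rfl⟩ fun _ ⟨d', hd', _, hd'n, heq⟩ =>
    heq ▸ hminClosedForm_le_hmin hn hd' hd'n

end Assembly

theorem stmt16_general (n : ℕ) (hn : Odd n) :
    hminN n = (n + 2 + n % 4) / 4 + (if n = 5 ∨ n = 9 then 1 else 0) ∧
    (n % 4 = 1 → n ≠ 5 → n ≠ 9 → hminN n = (n + 3) / 4) ∧
    (n % 4 = 3 → hminN n = (n + 5) / 4) := by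
  have h := hminN_eq_hminClosedForm hn
  rw [hminClosedForm] at h
  refine ⟨h, fun h1 h5 h9 => ?_, fun h3 => ?_⟩
  · rw [h, if_neg (by tauto)]
    omega
  · rw [h, if_neg (by omega)]
    omega

/-- `hmin(n) = (n + 2 + (n mod 4))/4 + [n ∈ {5,9}]`; in particular it is
`(n+3)/4` when `n ≡ 1 (mod 4)` and `n ∉ {5,9}`, and `(n+5)/4` when `n ≡ 3 (mod 4)`. -/
theorem stmt16 (n : ℕ) (hn : Odd n) (hnpos : 0 < n) :
    hminN n = (n + 2 + n % 4) / 4 + (if n = 5 ∨ n = 9 then 1 else 0) ∧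
    (n % 4 = 1 → n ≠ 5 → n ≠ 9 → hminN n = (n + 3) / 4) ∧
    (n % 4 = 3 → hminN n = (n + 5) / 4) :=
  stmt16_general n hn
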